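/- arXiv:1612.05603 — 5 statements merged into one kernel-verified Lean document; each statement's English description precedes it below -/
import Mathlib

section
/- Let n ≥ 2 and suppose pretty good state transfer occurs between the end vertices 1 and n of the path P_n. Then for every vertex a ∈ {1,…,n} with a ≠ (n+1)/2, pretty good state transfer occurs between vertices a and n + 1 − a. -/
open Real Finset

/-- Adjacency matrix of the path `P_n` on vertices `1,…,n` (indexed by `Fin n`),
over the complex numbers: the `(j,k)` entry is `1` iff `|j - k| = 1`. -/
noncomputable def pathAdj (n : ℕ) : Matrix (Fin n) (Fin n) ℂ :=
  Matrix.of fun j k => if j.val + 1 = k.val ∨ k.val + 1 = j.val then 1 else 0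

/-- The transition matrix `U(τ) = exp(iτA)` of the quantum walk on `P_n`. -/
noncomputable def pathU (n : ℕ) (τ : ℝ) : Matrix (Fin n) (Fin n) ℂ :=
  NormedSpace.exp ((Complex.I * (τ : ℂ)) • pathAdj n)

/-- Pretty good state transfer between vertices `a` and `b` of `P_n`
(vertex `a ∈ {1,…,n}` corresponds to index `a - 1 : Fin n`):
for every `ε > 0` there is a time `τ` with `|U(τ)_{a,b}| > 1 - ε`. -/
def PGST (n : ℕ) (a b : Fin n) : Prop :=
  ∀ ε : ℝ, 0 < ε → ∃ τ : ℝ, 1 - ε < ‖pathU n τ a b‖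

/-!
Let `R` be the reversal `j ↦ n + 1 - j`. Since `U(τ)` is a power series in `A` and `A` is
invariant under `R`, the matrix `B = U(τ) R` commutes with `A`, and `B_{j,j} = U(τ)_{j,n+1-j}`.
Pretty good transfer between the ends makes `|B_{1,1}|` close to `1`; as the first column of `B`
is a unit vector, `B e₁` is then close to `γ e₁` with `|γ| ≈ 1`. The polynomials `U_k(A/2)` map
`e₁` to `e_{k+1}` and commute with `B`, so `B e_{k+1}` is close to `γ e_{k+1}` as well, with an
error controlled by the norm of `U_k(A/2)`.
-/

open Matrix

lemma pathAdj_isHermitian (n : ℕ) : (pathAdj n).IsHermitian := by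
  ext j k
  simp only [pathAdj, conjTranspose_apply, of_apply, apply_ite (star : ℂ → ℂ), star_one,
    star_zero, or_comm]

lemma pathU_mem_unitaryGroup (n : ℕ) (τ : ℝ) : pathU n τ ∈ unitaryGroup (Fin n) ℂ := by
  rw [mem_unitaryGroup_iff', pathU, star_eq_conjTranspose, ← exp_conjTranspose,
    conjTranspose_smul, (pathAdj_isHermitian n).eq, ← exp_add_of_commute]
  · simp
  · exact (Commute.refl _).smul_left _ |>.smul_right _

lemma sum_norm_sq_col_of_mem_unitaryGroup {ι 𝕜 : Type*} [Fintype ι] [DecidableEq ι] [RCLike 𝕜]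
    {U : Matrix ι ι 𝕜} (hU : U ∈ unitaryGroup ι 𝕜) (j : ι) : ∑ i, ‖U i j‖ ^ 2 = 1 := by
  have h := congrFun₂ (mem_unitaryGroup_iff'.1 hU) j j
  simp only [mul_apply, star_apply, one_apply_eq, RCLike.star_def, RCLike.conj_mul] at h
  exact_mod_cast h

lemma commute_pathU_pathAdj (n : ℕ) (τ : ℝ) : Commute (pathU n τ) (pathAdj n) :=
  ((Commute.refl _).smul_left _).exp_left

lemma pathAdj_submatrix_rev (n : ℕ) : (pathAdj n).submatrix Fin.rev Fin.rev = pathAdj n := by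
  ext j k
  simp only [pathAdj, submatrix_apply, of_apply, Fin.val_rev]
  have := j.isLt
  have := k.isLt
  congr 1
  exact propext (by omega)

lemma Commute.submatrix_id_of_submatrix_eq_self {ι R : Type*} [Fintype ι]
    [NonUnitalNonAssocSemiring R] {U A : Matrix ι ι R} (h : Commute U A) (σ : ι ≃ ι)
    (hA : A.submatrix σ σ = A) :
    Commute (U.submatrix id σ) A := by
  have hU : U.submatrix id σ * A = (U * A).submatrix id σ := by
    rw [submatrix_mul _ _ _ σ _ σ.bijective, hA]
  have hU' : A * U.submatrix id σ = (A * U).submatrix id σ := by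
    rw [submatrix_mul _ _ _ id _ Function.bijective_id, submatrix_id_id]
  rw [Commute, SemiconjBy, hU, hU', h.eq]

/-- `pathCheb n k = U_k(A/2)`, with `U_k` the Chebyshev polynomials of the second kind. -/
noncomputable def pathCheb (n : ℕ) : ℕ → Matrix (Fin n) (Fin n) ℂ
  | 0 => 1
  | 1 => pathAdj n
  | k + 2 => pathAdj n * pathCheb n (k + 1) - pathCheb n k

lemma Commute.pathCheb {n : ℕ} {B : Matrix (Fin n) (Fin n) ℂ} (h : Commute B (pathAdj n)) :
    ∀ k, Commute B (pathCheb n k)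
  | 0 => Commute.one_right B
  | 1 => h
  | k + 2 => (h.mul_right (h.pathCheb (k + 1))).sub_right (h.pathCheb k)

lemma pathAdj_mulVec_single_zero {n : ℕ} (hn : 1 < n) :
    pathAdj n *ᵥ Pi.single ⟨0, by omega⟩ 1 = Pi.single ⟨1, hn⟩ 1 := by
  ext j
  simp only [mulVec_single_one, col_apply, pathAdj, of_apply, Pi.single_apply, Fin.ext_iff]
  congr 1
  exact propext (by omega)

lemma pathAdj_mulVec_single_succ {n k : ℕ} (hk : k + 2 < n) :
    pathAdj n *ᵥ Pi.single ⟨k + 1, by omega⟩ 1 =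
      Pi.single ⟨k, by omega⟩ 1 + Pi.single ⟨k + 2, hk⟩ 1 := by
  ext j
  simp only [mulVec_single_one, col_apply, pathAdj, of_apply, Pi.add_apply, Pi.single_apply,
    Fin.ext_iff]
  split_ifs <;> simp_all

lemma pathCheb_mulVec_single_zero {n : ℕ} :
    ∀ k (hk : k < n), pathCheb n k *ᵥ Pi.single ⟨0, by omega⟩ 1 = Pi.single ⟨k, hk⟩ 1
  | 0, _ => one_mulVec _
  | 1, hk => pathAdj_mulVec_single_zero hk
  | k + 2, hk => by
    rw [pathCheb, sub_mulVec, ← mulVec_mulVec, pathCheb_mulVec_single_zero (k + 1) (by omega),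
      pathCheb_mulVec_single_zero k (by omega), pathAdj_mulVec_single_succ hk, add_sub_cancel_left]

lemma Commute.mulVec_mulVec_sub_smul {ι R : Type*} [Fintype ι] [CommRing R]
    {B M : Matrix ι ι R} (h : Commute B M) (v : ι → R) (γ : R) :
    B *ᵥ (M *ᵥ v) - γ • (M *ᵥ v) = M *ᵥ (B *ᵥ v - γ • v) := by
  rw [mulVec_mulVec, h.eq, ← mulVec_mulVec, mulVec_sub, mulVec_smul]

lemma norm_mulVec_single_sub_le {ι 𝕜 : Type*} [Fintype ι] [DecidableEq ι] [RCLike 𝕜]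
    {B : Matrix ι ι 𝕜} {i : ι} (h : ∑ j, ‖B j i‖ ^ 2 ≤ 1) :
    ‖B *ᵥ Pi.single i 1 - B i i • Pi.single i 1‖ ≤ √(1 - ‖B i i‖ ^ 2) := by
  refine (pi_norm_le_iff_of_nonneg (Real.sqrt_nonneg _)).2 fun j => ?_
  rcases eq_or_ne j i with rfl | hji
  · simp
  · have hsum : ‖B j i‖ ^ 2 + ‖B i i‖ ^ 2 ≤ ∑ l, ‖B l i‖ ^ 2 :=
      Finset.add_le_sum (f := fun l => ‖B l i‖ ^ 2) (fun _ _ => sq_nonneg _) (mem_univ j)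
        (mem_univ i) hji
    simpa [hji] using Real.le_sqrt_of_sq_le (by linarith)

section

open scoped Matrix.Norms.Operator

theorem norm_sub_mul_sqrt_le_norm_diag_of_commute_pathAdj {n : ℕ} [NeZero n]
    {B : Matrix (Fin n) (Fin n) ℂ} (hB : Commute B (pathAdj n)) (hcol : ∑ j, ‖B j 0‖ ^ 2 ≤ 1)
    (k : Fin n) : ‖B 0 0‖ - ‖pathCheb n k‖ * √(1 - ‖B 0 0‖ ^ 2) ≤ ‖B k k‖ := by
  have hk : pathCheb n k *ᵥ Pi.single 0 1 = Pi.single k 1 :=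
    pathCheb_mulVec_single_zero k k.isLt
  have hdiff : B k k - B 0 0 =
      (pathCheb n k *ᵥ (B *ᵥ Pi.single 0 1 - B 0 0 • Pi.single 0 1)) k := by
    rw [← (hB.pathCheb k).mulVec_mulVec_sub_smul, hk]
    simp
  have hsmall : ‖B k k - B 0 0‖ ≤ ‖pathCheb n k‖ * √(1 - ‖B 0 0‖ ^ 2) := by
    rw [hdiff]
    refine (norm_le_pi_norm _ k).trans ((linfty_opNorm_mulVec _ _).trans ?_)
    gcongr
    exact norm_mulVec_single_sub_le hcol
  have := norm_sub_norm_le (B 0 0) (B k k)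
  rw [norm_sub_rev] at this
  linarith

theorem exists_pos_norm_diag_gt_of_commute_pathAdj {n : ℕ} [NeZero n] (k : Fin n) {ε : ℝ}
    (hε : 0 < ε) : ∃ δ > 0, ∀ B : Matrix (Fin n) (Fin n) ℂ, Commute B (pathAdj n) →
      ∑ j, ‖B j 0‖ ^ 2 ≤ 1 → 1 - δ < ‖B 0 0‖ → 1 - ε < ‖B k k‖ := by
  have hg : ContinuousAt (fun x : ℝ => x - ‖pathCheb n k‖ * √(1 - x ^ 2)) 1 := by fun_prop
  obtain ⟨δ, hδ, hnear⟩ := Metric.eventually_nhds_iff.1 <|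
    hg.eventually (lt_mem_nhds (show 1 - ε < 1 - ‖pathCheb n k‖ * √(1 - 1 ^ 2) by simpa))
  refine ⟨δ, hδ, fun B hB hcol hB00 => (hnear ?_).trans_le
    (norm_sub_mul_sqrt_le_norm_diag_of_commute_pathAdj hB hcol k)⟩
  have : ‖B 0 0‖ ^ 2 ≤ 1 := (Finset.single_le_sum (fun j _ => sq_nonneg ‖B j 0‖)
    (mem_univ 0)).trans hcol
  rw [Real.dist_eq, abs_sub_lt_iff]
  constructor <;> nlinarith [norm_nonneg (B 0 0)]

end

/-- If pretty good state transfer occurs between the end vertices `1` and `n` of `P_n`, then for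
every vertex `a` with `a ≠ (n+1)/2` (equivalently `2a ≠ n + 1`), pretty good state transfer
occurs between vertices `a` and `n + 1 - a`. -/
theorem pgst_ends_implies_pgst_symmetric_pairs (n : ℕ) (hn : 2 ≤ n)
    (h : PGST n ⟨0, by omega⟩ ⟨n - 1, by omega⟩)
    (a : ℕ) (ha : 1 ≤ a) (ha' : a ≤ n) :
    PGST n ⟨a - 1, by omega⟩ ⟨n + 1 - a - 1, by omega⟩ := by
  have : NeZero n := ⟨by omega⟩
  intro ε hε
  obtain ⟨δ, hδ, htransfer⟩ :=
    exists_pos_norm_diag_gt_of_commute_pathAdj (n := n) ⟨a - 1, by omega⟩ hε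
  obtain ⟨τ, hτ⟩ := h δ hδ
  have hB : Commute ((pathU n τ).submatrix id Fin.rev) (pathAdj n) :=
    (commute_pathU_pathAdj n τ).submatrix_id_of_submatrix_eq_self Fin.revPerm
      (pathAdj_submatrix_rev n)
  refine ⟨τ, ?_⟩
  convert htransfer _ hB
    (sum_norm_sq_col_of_mem_unitaryGroup (pathU_mem_unitaryGroup n τ) (Fin.rev 0)).le hτ using 3
  exact congrArg (pathU n τ _) (Fin.ext (by simp only [Fin.val_rev]; omega))
end

section
/- Let A be the adjacency matrix of the path P_n (as a real symmetric matrix) and let a, b ∈ {1,…,n}. If pretty good state transfer occurs between a and b, then a and b are strongly cospectral: for every eigenvalue θ of A, the orthogonal projection E_θ onto the θ-eigenspace of A satisfies E_θ e_a = E_θ e_b or E_θ e_a = −E_θ e_b, where e_a, e_b are standard basis vectors. -/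
open Real Finset

/-- Adjacency matrix of the path `P_n`, as a real symmetric matrix. -/
noncomputable def pathAdjR (n : ℕ) : Matrix (Fin n) (Fin n) ℝ :=
  Matrix.of fun j k => if j.val + 1 = k.val ∨ k.val + 1 = j.val then 1 else 0

/-! Expand `e_a` and `e_b` along the eigenspaces of `A`: with `E_θ` the eigenprojections,
`U(τ)_{ab} = ∑_θ e^{iτθ} ⟪E_θ e_a, E_θ e_b⟫`, so `|U(τ)_{ab}| ≤ ∑_θ |⟪E_θ e_a, E_θ e_b⟫|` for all
`τ`, and PGST forces this sum to be at least `1`. On the other hand `∑_θ ‖E_θ e_a‖² =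
∑_θ ‖E_θ e_b‖² = 1` and `2 |⟪u, v⟫| ≤ ‖u‖² + ‖v‖²`, with equality only for `u = ±v`; so every
eigenspace is an equality case. -/

section Inner

open RealInnerProductSpace

variable {F : Type*} [NormedAddCommGroup F] [InnerProductSpace ℝ F]

theorem two_mul_abs_real_inner_le (u v : F) : 2 * |⟪u, v⟫| ≤ ‖u‖ ^ 2 + ‖v‖ ^ 2 := by
  have := norm_sub_sq_real u v
  have := norm_add_sq_real u v
  rcases abs_cases ⟪u, v⟫ with ⟨habs, -⟩ | ⟨habs, -⟩ <;> nlinarith [sq_nonneg ‖u - v‖, sq_nonneg ‖u + v‖]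

theorem eq_or_eq_neg_of_norm_sq_add_norm_sq_le {u v : F}
    (h : ‖u‖ ^ 2 + ‖v‖ ^ 2 ≤ 2 * |⟪u, v⟫|) : u = v ∨ u = -v := by
  rcases abs_cases ⟪u, v⟫ with ⟨habs, -⟩ | ⟨habs, -⟩
  · left
    have := norm_sub_sq_real u v
    rw [← sub_eq_zero, ← norm_eq_zero]
    nlinarith [sq_nonneg ‖u - v‖]
  · right
    have := norm_add_sq_real u v
    rw [← add_eq_zero_iff_eq_neg, ← norm_eq_zero]
    nlinarith [sq_nonneg ‖u + v‖]

theorem eq_or_eq_neg_of_one_le_sum_abs_real_inner {κ : Type*} {s : Finset κ} {u v : κ → F}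
    (hu : ∑ k ∈ s, ‖u k‖ ^ 2 = 1) (hv : ∑ k ∈ s, ‖v k‖ ^ 2 = 1)
    (h : 1 ≤ ∑ k ∈ s, |⟪u k, v k⟫|) : ∀ k ∈ s, u k = v k ∨ u k = -v k := by
  -- each summand is `min ‖u k - v k‖² ‖u k + v k‖² ≥ 0`, and they add up to at most `0`
  have hdefect : ∑ k ∈ s, (‖u k‖ ^ 2 + ‖v k‖ ^ 2 - 2 * |⟪u k, v k⟫|) = 0 := by
    refine le_antisymm ?_ (sum_nonneg fun k _ => sub_nonneg.2 (two_mul_abs_real_inner_le _ _))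
    rw [sum_sub_distrib, sum_add_distrib, ← mul_sum, hu, hv]
    linarith
  intro k hk
  refine eq_or_eq_neg_of_norm_sq_add_norm_sq_le (sub_nonpos.1 (le_of_eq ?_))
  exact (sum_eq_zero_iff_of_nonneg
    (fun k _ => sub_nonneg.2 (two_mul_abs_real_inner_le _ _))).1 hdefect k hk

end Inner

theorem Submodule.inner_starProjection_starProjection {𝕜 E : Type*} [RCLike 𝕜]
    [NormedAddCommGroup E] [InnerProductSpace 𝕜 E] (K : Submodule 𝕜 E) [K.HasOrthogonalProjection]
    (x y : E) :
    inner 𝕜 (K.starProjection x) (K.starProjection y) = inner 𝕜 (K.starProjection x) y := by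
  rw [← K.inner_starProjection_left_eq_right,
    K.starProjection_eq_self_iff.2 (K.starProjection_apply_mem x)]

namespace LinearMap.IsSymmetric

open Module.End

section General

open InnerProductSpace

variable {𝕜 E ι : Type*} [RCLike 𝕜] [NormedAddCommGroup E] [InnerProductSpace 𝕜 E]
  [FiniteDimensional 𝕜 E] {T : E →ₗ[𝕜] E}

theorem starProjection_eigenspace_of_mem_eigenspace (hT : T.IsSymmetric) {μ : 𝕜} {x : E}
    (hx : x ∈ eigenspace T μ) (θ : 𝕜) :
    (eigenspace T θ).starProjection x = if μ = θ then x else 0 := by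
  split_ifs with hμθ
  · exact Submodule.starProjection_eq_self_iff.2 (hμθ ▸ hx)
  · exact (Submodule.starProjection_apply_eq_zero_iff _).2
      (hT.orthogonalFamily_eigenspaces.isOrtho hμθ hx)

variable [Fintype ι] [DecidableEq 𝕜]

theorem starProjection_eigenspace_eq_sum (hT : T.IsSymmetric) (v : OrthonormalBasis ι 𝕜 E)
    {μ : ι → 𝕜} (hv : ∀ i, v i ∈ eigenspace T (μ i)) (θ : 𝕜) (x : E) :
    (eigenspace T θ).starProjection x = ∑ i ∈ univ.filter (μ · = θ), ⟪v i, x⟫_𝕜 • v i := by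
  conv_lhs => rw [← v.sum_repr' x]
  simp only [map_sum, map_smul, starProjection_eigenspace_of_mem_eigenspace hT (hv _),
    smul_ite, smul_zero, sum_filter]

theorem sum_starProjection_eigenspace (hT : T.IsSymmetric) (v : OrthonormalBasis ι 𝕜 E)
    {μ : ι → 𝕜} (hv : ∀ i, v i ∈ eigenspace T (μ i)) (x : E) :
    ∑ θ ∈ univ.image μ, (eigenspace T θ).starProjection x = x := by
  simp only [starProjection_eigenspace_eq_sum hT v hv]
  rw [sum_fiberwise_of_maps_to (fun i _ => mem_image_of_mem μ (mem_univ i)), v.sum_repr']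

theorem sum_norm_sq_starProjection_eigenspace (hT : T.IsSymmetric) (v : OrthonormalBasis ι 𝕜 E)
    {μ : ι → 𝕜} (hv : ∀ i, v i ∈ eigenspace T (μ i)) (x : E) :
    ∑ θ ∈ univ.image μ, ‖(eigenspace T θ).starProjection x‖ ^ 2 = ‖x‖ ^ 2 := by
  simp_rw [@norm_sq_eq_re_inner 𝕜, Submodule.inner_starProjection_starProjection, ← map_sum,
    ← sum_inner, sum_starProjection_eigenspace hT v hv]

end General

section Real

open RealInnerProductSpace

variable {E ι : Type*} [NormedAddCommGroup E] [InnerProductSpace ℝ E] [FiniteDimensional ℝ E]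
  [Fintype ι] {T : E →ₗ[ℝ] E}

theorem starProjection_eigenspace_eq_or_eq_neg (hT : T.IsSymmetric) (v : OrthonormalBasis ι ℝ E)
    {μ : ι → ℝ} (hv : ∀ i, v i ∈ eigenspace T (μ i)) {x y : E} (hx : ‖x‖ = 1) (hy : ‖y‖ = 1)
    (h : 1 ≤ ∑ θ ∈ univ.image μ,
      |⟪(eigenspace T θ).starProjection x, (eigenspace T θ).starProjection y⟫|) (θ : ℝ) :
    (eigenspace T θ).starProjection x = (eigenspace T θ).starProjection y ∨
      (eigenspace T θ).starProjection x = -(eigenspace T θ).starProjection y := by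
  by_cases hθ : θ ∈ univ.image μ
  · refine eq_or_eq_neg_of_one_le_sum_abs_real_inner
      (u := fun θ => (eigenspace T θ).starProjection x)
      (v := fun θ => (eigenspace T θ).starProjection y) ?_ ?_ h θ hθ
    · rw [hT.sum_norm_sq_starProjection_eigenspace v hv, hx, one_pow]
    · rw [hT.sum_norm_sq_starProjection_eigenspace v hv, hy, one_pow]
  · have hempty : univ.filter (μ · = θ) = ∅ :=
      filter_eq_empty_iff.2 fun i _ hi => hθ (hi ▸ mem_image_of_mem _ (mem_univ i))
    left
    rw [hT.starProjection_eigenspace_eq_sum v hv, hT.starProjection_eigenspace_eq_sum v hv, hempty,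
      sum_empty, sum_empty]

end Real

end LinearMap.IsSymmetric

namespace Matrix

open Module.End InnerProductSpace

variable {ι : Type*} [Fintype ι] [DecidableEq ι]

theorem IsHermitian.mem_eigenspace_eigenvectorBasis {𝕜 : Type*} [RCLike 𝕜] {A : Matrix ι ι 𝕜}
    (hA : A.IsHermitian) (i : ι) :
    hA.eigenvectorBasis i ∈ eigenspace (toEuclideanLin A) (hA.eigenvalues i : 𝕜) := by
  rw [mem_eigenspace_iff]
  apply WithLp.ofLp_injective
  rw [WithLp.ofLp_smul, ← RCLike.real_smul_eq_coe_smul, ← hA.mulVec_eigenvectorBasis]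
  rfl

namespace IsHermitian

variable {A : Matrix ι ι ℝ}

theorem exp_smul_map_ofReal_apply (hA : A.IsHermitian) (s : ℂ) (x y : ι) :
    NormedSpace.exp (s • A.map ((↑) : ℝ → ℂ)) x y =
      ∑ i, Complex.exp (s * hA.eigenvalues i) * hA.eigenvectorBasis i x *
        hA.eigenvectorBasis i y := by
  set U : Matrix ι ι ℝ := (hA.eigenvectorUnitary : Matrix ι ι ℝ)
  set V : Matrix ι ι ℂ := U.map Complex.ofRealHom
  have hV : V * (star U).map Complex.ofRealHom = 1 := by
    rw [← Matrix.map_mul, mem_unitaryGroup_iff.1 hA.eigenvectorUnitary.2,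
      Matrix.map_one _ (map_zero _) (map_one _)]
  have hVinv : V⁻¹ = (star U).map Complex.ofRealHom := inv_eq_right_inv hV
  have hD : diagonal (fun i => s * hA.eigenvalues i) =
      s • (diagonal (RCLike.ofReal ∘ hA.eigenvalues)).map Complex.ofRealHom := by
    rw [diagonal_map (map_zero _), ← diagonal_smul]
    rfl
  have hconj : s • A.map ((↑) : ℝ → ℂ) = V * diagonal (fun i => s * hA.eigenvalues i) * V⁻¹ := by
    change s • A.map Complex.ofRealHom = _
    conv_lhs => rw [hA.spectral_theorem, Unitary.conjStarAlgAut_apply]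
    rw [hVinv, hD, mul_smul_comm, smul_mul_assoc, ← Matrix.map_mul, ← Matrix.map_mul]
  rw [hconj, exp_conj _ _ ((isUnit_iff_isUnit_det V).2 (isUnit_det_of_right_inverse hV)),
    exp_diagonal, hVinv, mul_apply]
  refine sum_congr rfl fun i _ => ?_
  rw [mul_diagonal]
  simp only [V, U, map_apply, star_apply, eigenvectorUnitary_apply, star_trivial,
    Complex.ofRealHom_eq_coe, Complex.exp_eq_exp_ℂ, Pi.coe_exp]
  ring

theorem inner_starProjection_eigenspace_single (hA : A.IsHermitian) (θ : ℝ) (a b : ι) :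
    inner ℝ ((eigenspace (toEuclideanLin A) θ).starProjection (EuclideanSpace.single a 1))
      ((eigenspace (toEuclideanLin A) θ).starProjection (EuclideanSpace.single b 1)) =
      ∑ i ∈ univ.filter (hA.eigenvalues · = θ),
        hA.eigenvectorBasis i a * hA.eigenvectorBasis i b := by
  have hv : ∀ i, hA.eigenvectorBasis i ∈ eigenspace (toEuclideanLin A) (hA.eigenvalues i) :=
    hA.mem_eigenspace_eigenvectorBasis
  rw [Submodule.inner_starProjection_starProjection,
    (isSymmetric_toEuclideanLin_iff.2 hA).starProjection_eigenspace_eq_sum _ hv, sum_inner]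
  simp [EuclideanSpace.inner_single_right]

theorem exp_apply_eq_sum_eigenspace (hA : A.IsHermitian) (τ : ℝ) (a b : ι) :
    NormedSpace.exp ((Complex.I * τ) • A.map ((↑) : ℝ → ℂ)) a b =
      ∑ θ ∈ univ.image hA.eigenvalues, Complex.exp (Complex.I * τ * θ) *
        inner ℝ ((eigenspace (toEuclideanLin A) θ).starProjection (EuclideanSpace.single a 1))
          ((eigenspace (toEuclideanLin A) θ).starProjection (EuclideanSpace.single b 1)) := by
  rw [hA.exp_smul_map_ofReal_apply, ← sum_fiberwise_of_maps_to (g := hA.eigenvalues)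
    (fun i _ => mem_image_of_mem _ (mem_univ i))]
  refine sum_congr rfl fun θ _ => ?_
  rw [hA.inner_starProjection_eigenspace_single, Complex.ofReal_sum, mul_sum]
  refine sum_congr rfl fun i hi => ?_
  rw [← (mem_filter.1 hi).2]
  push_cast
  ring

theorem norm_exp_apply_le (hA : A.IsHermitian) (τ : ℝ) (a b : ι) :
    ‖NormedSpace.exp ((Complex.I * τ) • A.map ((↑) : ℝ → ℂ)) a b‖ ≤
      ∑ θ ∈ univ.image hA.eigenvalues,
        |inner ℝ ((eigenspace (toEuclideanLin A) θ).starProjection (EuclideanSpace.single a 1))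
          ((eigenspace (toEuclideanLin A) θ).starProjection (EuclideanSpace.single b 1))| := by
  rw [hA.exp_apply_eq_sum_eigenspace]
  refine (norm_sum_le _ _).trans (sum_le_sum fun θ _ => ?_)
  rw [norm_mul, mul_assoc, ← Complex.ofReal_mul, Complex.norm_exp_I_mul_ofReal, one_mul,
    Complex.norm_real, Real.norm_eq_abs]

theorem starProjection_eigenspace_single_eq_or_eq_neg (hA : A.IsHermitian) {a b : ι}
    (h : ∀ ε : ℝ, 0 < ε → ∃ τ : ℝ,
      1 - ε < ‖NormedSpace.exp ((Complex.I * τ) • A.map ((↑) : ℝ → ℂ)) a b‖) (θ : ℝ) :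
    (eigenspace (toEuclideanLin A) θ).starProjection (EuclideanSpace.single a 1) =
        (eigenspace (toEuclideanLin A) θ).starProjection (EuclideanSpace.single b 1) ∨
      (eigenspace (toEuclideanLin A) θ).starProjection (EuclideanSpace.single a 1) =
        -(eigenspace (toEuclideanLin A) θ).starProjection (EuclideanSpace.single b 1) := by
  have hv : ∀ i, hA.eigenvectorBasis i ∈ eigenspace (toEuclideanLin A) (hA.eigenvalues i) :=
    hA.mem_eigenspace_eigenvectorBasis
  refine (isSymmetric_toEuclideanLin_iff.2 hA).starProjection_eigenspace_eq_or_eq_neg _ hv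
    (by simp) (by simp) (le_of_forall_pos_lt_add fun ε hε => ?_) θ
  obtain ⟨τ, hτ⟩ := h ε hε
  linarith [hA.norm_exp_apply_le τ a b]

end IsHermitian

end Matrix

theorem pathAdjR_isHermitian (n : ℕ) : (pathAdjR n).IsHermitian := by
  ext j k
  simp only [Matrix.conjTranspose_apply, pathAdjR, Matrix.of_apply, star_trivial]
  exact if_congr or_comm rfl rfl

theorem pathAdj_eq_map_pathAdjR (n : ℕ) : pathAdj n = (pathAdjR n).map ((↑) : ℝ → ℂ) := by
  ext j k
  simp [pathAdj, pathAdjR, apply_ite Complex.ofReal]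

/-- If pretty good state transfer occurs between vertices `a` and `b` of `P_n`, then `a` and `b`
are strongly cospectral: for every eigenvalue `θ` of the (real) adjacency matrix, the orthogonal
projection `E_θ` onto the `θ`-eigenspace satisfies `E_θ e_a = E_θ e_b` or `E_θ e_a = -E_θ e_b`. -/
theorem pgst_implies_strongly_cospectral (n : ℕ) (a b : ℕ)
    (ha : 1 ≤ a) (ha' : a ≤ n) (hb : 1 ≤ b) (hb' : b ≤ n)
    (h : PGST n ⟨a - 1, by omega⟩ ⟨b - 1, by omega⟩) :
    ∀ θ : ℝ, Module.End.HasEigenvalue (Matrix.toEuclideanLin (pathAdjR n)) θ →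
      (Submodule.orthogonalProjectionOnto (Module.End.eigenspace (Matrix.toEuclideanLin (pathAdjR n)) θ)
          (EuclideanSpace.single ⟨a - 1, by omega⟩ 1) =
        Submodule.orthogonalProjectionOnto (Module.End.eigenspace (Matrix.toEuclideanLin (pathAdjR n)) θ)
          (EuclideanSpace.single ⟨b - 1, by omega⟩ 1) ∨
       Submodule.orthogonalProjectionOnto (Module.End.eigenspace (Matrix.toEuclideanLin (pathAdjR n)) θ)
          (EuclideanSpace.single ⟨a - 1, by omega⟩ 1) =
        - Submodule.orthogonalProjectionOnto (Module.End.eigenspace (Matrix.toEuclideanLin (pathAdjR n)) θ)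
          (EuclideanSpace.single ⟨b - 1, by omega⟩ 1)) := by
  intro θ _
  rcases (pathAdjR_isHermitian n).starProjection_eigenspace_single_eq_or_eq_neg
    (by simpa only [PGST, pathU, pathAdj_eq_map_pathAdjR] using h) θ with hab | hab
  · exact Or.inl (Subtype.ext (by simpa only [Submodule.coe_orthogonalProjectionOnto_apply]))
  · exact Or.inr (Subtype.ext (by simpa only [Submodule.coe_orthogonalProjectionOnto_apply,
      Submodule.coe_neg]))
end

section
/- Let A be the adjacency matrix of the path P_n on vertices 1,…,n. If a + b = n + 1, then for each j ∈ {1,…,n}, the orthogonal projection E_j onto the eigenspace of the eigenvalue θ_j = 2cos(jπ/(n+1)) satisfies E_j e_a = E_j e_b when j is odd and E_j e_a = −E_j e_b when j is even. -/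
/-!
An eigenvector `w` of the path for the eigenvalue `2 cos s`, read as a sequence with
`w 0 = 0`, satisfies `w (k + 2) + w k = 2 cos s * w (k + 1)`, hence
`w k * sin s = w 1 * sin (k s)`. For `s = jπ/(n+1)` one has
`sin ((n + 1 - k) s) = (-1)^(j+1) sin (k s)`, so every vector of the eigenspace satisfies
`w a = (-1)^(j+1) w b` when `a + b = n + 1`. Thus `e_a - (-1)^(j+1) e_b` is orthogonal to the
eigenspace and is killed by `E_j`.
-/

open Real Finset

open Matrix

theorem orthogonalProjectionOnto_single_eq_smul {ι : Type*} [Fintype ι] [DecidableEq ι]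
    (K : Submodule ℝ (EuclideanSpace ℝ ι)) {i i' : ι} {c : ℝ}
    (h : ∀ u ∈ K, u i = c * u i') :
    K.orthogonalProjectionOnto (EuclideanSpace.single i 1) =
      c • K.orthogonalProjectionOnto (EuclideanSpace.single i' 1) := by
  have hmem : EuclideanSpace.single i (1 : ℝ) - c • EuclideanSpace.single i' 1 ∈ Kᗮ := by
    rw [Submodule.mem_orthogonal]
    intro u hu
    simp [inner_sub_right, inner_smul_right, EuclideanSpace.inner_single_right, h u hu]
  rw [← sub_eq_zero, ← map_smul, ← map_sub]
  exact K.orthogonalProjectionOnto_apply_of_mem_orthogonal hmem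

theorem sin_mul_eq_neg_one_pow_mul_sin {x y : ℝ} {n : ℕ} (j : ℕ) (h : x + y = n + 1) :
    sin (x * (j * π / (n + 1))) = (-1) ^ (j + 1) * sin (y * (j * π / (n + 1))) := by
  have hx : x * (j * π / (n + 1)) = j * π - y * (j * π / (n + 1)) := by
    rw [eq_sub_iff_add_eq, ← add_mul, h]
    field_simp
  rw [hx, sin_nat_mul_pi_sub, pow_succ]
  ring

theorem mul_sin_eq_of_chebyshev_recurrence {w : ℕ → ℝ} {s : ℝ} {N : ℕ} (h0 : w 0 = 0)
    (hrec : ∀ k, k + 2 ≤ N → w (k + 2) + w k = 2 * cos s * w (k + 1)) :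
    ∀ k ≤ N, w k * sin s = w 1 * sin (k * s)
  | 0, _ => by simp [h0]
  | 1, _ => by simp
  | k + 2, hk => by
    have ih₀ := mul_sin_eq_of_chebyshev_recurrence h0 hrec k (by omega)
    have ih₁ := mul_sin_eq_of_chebyshev_recurrence h0 hrec (k + 1) (by omega)
    have hsin : sin ((k + 2 : ℕ) * s) + sin (k * s) = 2 * cos s * sin ((k + 1 : ℕ) * s) := by
      have e₂ : ((k + 2 : ℕ) : ℝ) * s = (k + 1 : ℕ) * s + s := by push_cast; ring
      have e₀ : (k : ℝ) * s = (k + 1 : ℕ) * s - s := by push_cast; ring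
      rw [e₂, e₀, sin_add, sin_sub]
      ring
    linear_combination (2 * cos s) * ih₁ - ih₀ + sin s * hrec k hk - w 1 * hsin

/-- The values of `v` on the vertices `1, …, n`, extended by zero to the vertices `0` and `n + 1`
(and beyond), so that the eigenvalue equation of the path has no boundary cases. -/
def pathSeq {n : ℕ} (v : Fin n → ℝ) (k : ℕ) : ℝ :=
  if h : 1 ≤ k ∧ k ≤ n then v ⟨k - 1, by omega⟩ else 0

section pathSeq

variable {n : ℕ} (v : Fin n → ℝ)

@[simp]
theorem pathSeq_zero : pathSeq v 0 = 0 := by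
  simp [pathSeq]

theorem pathSeq_of_lt {k : ℕ} (hk : n < k) : pathSeq v k = 0 :=
  dif_neg (by omega)

@[simp]
theorem pathSeq_val_add_one (i : Fin n) : pathSeq v (i + 1) = v i := by
  simp [pathSeq, i.isLt]

theorem pathAdjR_mulVec_apply (i : Fin n) :
    (pathAdjR n *ᵥ v) i = pathSeq v i + pathSeq v (i + 2) := by
  -- For `i = 0` the truncated `i - 1 = m` catches `m = 0`, harmlessly since `pathSeq v 0 = 0`.
  have hterm : ∀ m : ℕ, (if i.val + 1 = m ∨ m + 1 = i.val then 1 else 0) * pathSeq v (m + 1) =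
      (if i.val + 1 = m then pathSeq v (i + 2) else 0) +
        (if i.val - 1 = m then pathSeq v i else 0) := by
    intro m
    by_cases h₁ : i.val + 1 = m
    · subst h₁
      simp [show ¬i.val + 1 + 1 = i.val by omega, show ¬i.val - 1 = i.val + 1 by omega]
    · by_cases h₂ : m + 1 = i.val
      · simp [h₁, h₂, show i.val - 1 = m by omega]
      · simp only [h₁, h₂, or_self, if_false, zero_mul, zero_add]
        split_ifs
        · rw [show i.val = 0 by omega, pathSeq_zero]
        · rfl
  simp only [mulVec, dotProduct, pathAdjR, of_apply, ← pathSeq_val_add_one v]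
  rw [Fin.sum_univ_eq_sum_range
      (fun m ↦ (if i.val + 1 = m ∨ m + 1 = i.val then (1 : ℝ) else 0) * pathSeq v (m + 1)),
    sum_congr rfl fun m _ ↦ hterm m, sum_add_distrib, sum_ite_eq, sum_ite_eq, add_comm,
    if_pos (mem_range.2 (by omega))]
  by_cases h : i.val + 1 < n
  · simp [h]
  · simp [h, pathSeq_of_lt v (show n < i.val + 2 by omega)]

theorem pathSeq_add_pathSeq_of_mem_eigenspace {μ : ℝ} {w : EuclideanSpace ℝ (Fin n)}
    (hw : w ∈ Module.End.eigenspace (toEuclideanLin (pathAdjR n)) μ) {k : ℕ} (hk : k < n) :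
    pathSeq w (k + 2) + pathSeq w k = μ * pathSeq w (k + 1) := by
  rw [Module.End.mem_eigenspace_iff] at hw
  have := congrArg (fun x : EuclideanSpace ℝ (Fin n) => x ⟨k, hk⟩) hw
  simp only [toLpLin_apply, pathAdjR_mulVec_apply, PiLp.smul_apply, smul_eq_mul] at this
  rw [add_comm, this, ← pathSeq_val_add_one w.ofLp ⟨k, hk⟩]

end pathSeq

theorem apply_eq_neg_one_pow_mul_of_mem_eigenspace_pathAdjR {n j : ℕ}
    (hj : 1 ≤ j) (hjn : j ≤ n) {w : EuclideanSpace ℝ (Fin n)}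
    (hw : w ∈ Module.End.eigenspace (toEuclideanLin (pathAdjR n)) (2 * cos (j * π / (n + 1))))
    {i i' : Fin n} (hii' : i.val + i'.val + 1 = n) :
    w i = (-1) ^ (j + 1) * w i' := by
  set s := j * π / (n + 1)
  have hsin : sin s ≠ 0 := by
    refine (sin_pos_of_pos_of_lt_pi (by positivity) ?_).ne'
    rw [div_lt_iff₀ (by positivity)]
    nlinarith [pi_pos, (by exact_mod_cast hjn : (j : ℝ) ≤ n)]
  have hrec := mul_sin_eq_of_chebyshev_recurrence (N := n + 1) (pathSeq_zero (w : Fin n → ℝ))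
    (fun k hk => pathSeq_add_pathSeq_of_mem_eigenspace hw (by omega))
  have hi := hrec (i + 1) (by omega)
  have hi' := hrec (i' + 1) (by omega)
  have hsum : ((i + 1 : ℕ) : ℝ) + ((i' + 1 : ℕ) : ℝ) = n + 1 := by
    exact_mod_cast (by omega : i.val + 1 + (i'.val + 1) = n + 1)
  have hrefl := sin_mul_eq_neg_one_pow_mul_sin j hsum
  simp only [pathSeq_val_add_one] at hi hi'
  apply mul_right_cancel₀ hsin
  linear_combination hi - (-1) ^ (j + 1) * hi' + pathSeq w 1 * hrefl

/-- If `a + b = n + 1`, then for each `j ∈ {1,…,n}`, the orthogonal projection `E_j` onto the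
eigenspace of the eigenvalue `θ_j = 2cos(jπ/(n+1))` of the adjacency matrix of `P_n` satisfies
`E_j e_a = E_j e_b` when `j` is odd, and `E_j e_a = -E_j e_b` when `j` is even. -/
theorem projection_parity_of_sum_eq (n : ℕ) (a b : ℕ)
    (ha : 1 ≤ a) (ha' : a ≤ n)
    (hab : a + b = n + 1) :
    ∀ j : ℕ, 1 ≤ j → j ≤ n →
      (Odd j →
        Submodule.orthogonalProjectionOnto
            (Module.End.eigenspace (Matrix.toEuclideanLin (pathAdjR n))
              (2 * Real.cos (j * Real.pi / (n + 1))))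
            (EuclideanSpace.single ⟨a - 1, by omega⟩ 1) =
          Submodule.orthogonalProjectionOnto
            (Module.End.eigenspace (Matrix.toEuclideanLin (pathAdjR n))
              (2 * Real.cos (j * Real.pi / (n + 1))))
            (EuclideanSpace.single ⟨b - 1, by omega⟩ 1)) ∧
      (Even j →
        Submodule.orthogonalProjectionOnto
            (Module.End.eigenspace (Matrix.toEuclideanLin (pathAdjR n))
              (2 * Real.cos (j * Real.pi / (n + 1))))
            (EuclideanSpace.single ⟨a - 1, by omega⟩ 1) =
          - Submodule.orthogonalProjectionOnto
            (Module.End.eigenspace (Matrix.toEuclideanLin (pathAdjR n))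
              (2 * Real.cos (j * Real.pi / (n + 1))))
            (EuclideanSpace.single ⟨b - 1, by omega⟩ 1)) := by
  intro j hj hjn
  have hsymm : ∀ u ∈ Module.End.eigenspace (toEuclideanLin (pathAdjR n))
        (2 * cos (j * π / (n + 1))),
      u ⟨a - 1, by omega⟩ = (-1) ^ (j + 1) * u ⟨b - 1, by omega⟩ :=
    fun _ hu ↦
      apply_eq_neg_one_pow_mul_of_mem_eigenspace_pathAdjR hj hjn hu (by dsimp only; omega)
  have hproj := orthogonalProjectionOnto_single_eq_smul _ hsymm
  refine ⟨fun hodd => ?_, fun heven => ?_⟩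
  · rwa [(Nat.even_add_one.2 (Nat.not_even_iff_odd.2 hodd)).neg_one_pow, one_smul] at hproj
  · rwa [heven.add_one.neg_one_pow, neg_one_smul] at hproj
end

section
/- Let n ≥ 1 and j ∈ {1,…,n}. The vector v ∈ ℝ^n with entries v_k = sin(kjπ/(n+1)) for k = 1,…,n is a nonzero eigenvector of the adjacency matrix of the path P_n with eigenvalue 2cos(jπ/(n+1)). -/
open Real Finset

lemma sum_indic {n : ℕ} (c : ℕ) (g : Fin n → ℝ) :
    (∑ l : Fin n, (if c = l.val then (1:ℝ) else 0) * g l) =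
      if h : c < n then g ⟨c, h⟩ else 0 := by
  split_ifs with h
  · rw [Finset.sum_eq_single (⟨c, h⟩ : Fin n)]
    · simp
    · intro b _ hb
      have : c ≠ b.val := fun hc => hb (by apply Fin.ext; simp [hc.symm])
      simp [this]
    · simp
  · apply Finset.sum_eq_zero
    intro l _
    have hl := l.isLt
    have : c ≠ l.val := by omega
    simp [this]

/-- For `1 ≤ j ≤ n`, the vector with `k`-th entry `sin(kjπ/(n+1))`, `k = 1,…,n`, is a nonzero
eigenvector of the adjacency matrix of `P_n` with eigenvalue `2cos(jπ/(n+1))`. -/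
theorem path_eigenvector (n : ℕ) (hn : 1 ≤ n) (j : ℕ) (hj : 1 ≤ j) (hj' : j ≤ n) :
    (fun k : Fin n => Real.sin ((k.val + 1) * j * Real.pi / (n + 1))) ≠ 0 ∧
    (pathAdjR n).mulVec (fun k : Fin n => Real.sin ((k.val + 1) * j * Real.pi / (n + 1))) =
      (2 * Real.cos (j * Real.pi / (n + 1))) •
        (fun k : Fin n => Real.sin ((k.val + 1) * j * Real.pi / (n + 1))) := by
  set θ : ℝ := j * Real.pi / (n + 1) with hθ
  have hn1 : (0:ℝ) < n + 1 := by positivity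
  have hθpos : 0 < θ := by
    apply div_pos _ hn1
    have : (0:ℝ) < j := by exact_mod_cast hj
    positivity
  have hθlt : θ < Real.pi := by
    rw [hθ, div_lt_iff₀ hn1]
    have hjn : (j:ℝ) ≤ n := by exact_mod_cast hj'
    have : (j:ℝ) * Real.pi ≤ n * Real.pi := by
      apply mul_le_mul_of_nonneg_right hjn Real.pi_pos.le
    have hlt : (n:ℝ) * Real.pi < Real.pi * (n+1) := by nlinarith [Real.pi_pos]
    linarith
  -- f m = sin (m θ)
  set f : ℕ → ℝ := fun m => Real.sin (m * θ) with hf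
  have hfs : ∀ k : Fin n, Real.sin ((k.val + 1) * j * Real.pi / (n + 1)) = f (k.val + 1) := by
    intro k
    simp only [hf, hθ]
    congr 1
    push_cast
    ring
  have hf0 : f 0 = 0 := by simp [hf]
  have hfn1 : f (n+1) = 0 := by
    have : ((n:ℝ)+1) * θ = j * Real.pi := by
      rw [hθ]; field_simp
    simp only [hf]
    push_cast
    rw [this, Real.sin_nat_mul_pi]
  have key : ∀ m : ℕ, f m + f (m + 2) = 2 * Real.cos θ * f (m+1) := by
    intro m
    simp only [hf]
    push_cast
    have h1 : ((m:ℝ)) * θ = ((m:ℝ)+1) * θ - θ := by ring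
    have h2 : ((m:ℝ)+2) * θ = ((m:ℝ)+1) * θ + θ := by ring
    rw [h1, h2, Real.sin_sub, Real.sin_add]
    ring
  constructor
  · intro h
    have h0 : Real.sin ((((⟨0, hn⟩ : Fin n)).val + 1) * j * Real.pi / (n + 1)) = 0 :=
      congrFun h ⟨0, hn⟩
    have : Real.sin θ ≠ 0 := ne_of_gt (Real.sin_pos_of_pos_of_lt_pi hθpos hθlt)
    apply this
    rw [← h0]
    congr 1
    rw [hθ]
    push_cast
    ring
  · funext k
    have hkn := k.isLt
    simp only [Matrix.mulVec, dotProduct, pathAdjR, Matrix.of_apply, Pi.smul_apply,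
      smul_eq_mul]
    rw [show (fun l : Fin n => (if k.val + 1 = l.val ∨ l.val + 1 = k.val then (1:ℝ) else 0) *
        Real.sin ((l.val + 1) * j * Real.pi / (n + 1))) = fun l : Fin n =>
        (if k.val + 1 = l.val then (1:ℝ) else 0) * f (l.val + 1)
        + (if k.val - 1 = l.val ∧ 1 ≤ k.val then (1:ℝ) else 0) * f (l.val + 1) from ?_]
    · rw [Finset.sum_add_distrib]
      have e1 : (∑ l : Fin n, (if k.val + 1 = l.val then (1:ℝ) else 0) * f (l.val + 1))
          = f (k.val + 2) := by
        rw [sum_indic]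
        split_ifs with h
        · rfl
        · have hk : k.val + 1 = n := by omega
          rw [show k.val + 2 = n + 1 by omega, hfn1]
      have e2 : (∑ l : Fin n, (if k.val - 1 = l.val ∧ 1 ≤ k.val then (1:ℝ) else 0) * f (l.val + 1))
          = f k.val := by
        by_cases hk1 : 1 ≤ k.val
        · have : ∀ l : Fin n, (if k.val - 1 = l.val ∧ 1 ≤ k.val then (1:ℝ) else 0)
              = (if k.val - 1 = l.val then (1:ℝ) else 0) := by
            intro l; simp [hk1]
          simp_rw [this]
          rw [sum_indic]
          have h : k.val - 1 < n := by omega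
          rw [dif_pos h]
          congr 1
          have hv : (⟨k.val - 1, h⟩ : Fin n).val = k.val - 1 := rfl
          rw [hv]
          omega
        · have hk0 : k.val = 0 := by omega
          rw [hk0, hf0]
          apply Finset.sum_eq_zero
          intro l _
          simp [hk1]
      rw [e1, e2, hfs k, ← key k.val]
      ring
    · funext l
      have hln := l.isLt
      rw [hfs l]
      by_cases h1 : k.val + 1 = l.val
      · have h2 : ¬ (k.val - 1 = l.val ∧ 1 ≤ k.val) := by omega
        simp [h1, h2]
      · by_cases h3 : l.val + 1 = k.val
        · have h2 : k.val - 1 = l.val ∧ 1 ≤ k.val := by omega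
          simp [h1, h2, h3]
        · have h2 : ¬ (k.val - 1 = l.val ∧ 1 ≤ k.val) := by omega
          simp [h1, h2, h3]
end

section
/- Let n = 2^t·p − 1 where t is a positive integer and p is an odd prime, and let a ∈ {1,…,n} be a vertex such that 2^{t−1} does not divide a. Then pretty good state transfer does not occur in P_n between vertices a and n + 1 − a. -/
open Real Finset

open Filter Topology

/-!
With `N = n + 1`, the eigenvalues of `P_n` are `2 cos (kπ/N)` with eigenvectors
`(sin (jkπ/N))_j`, and `sin ((N - a)kπ/N) = (-1)^(k-1) sin (akπ/N)`. Hence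
`U(τ)_{a, N-a} = ∑ₖ wₖ (-1)^(k-1) exp (2iτ cos (kπ/N))` with weights `wₖ = (2/N) sin² (akπ/N)`
summing to `1`. If this has modulus close to `1`, all the unit phases with `wₖ > 0` lie close to
a common `ζ`, so for two families of `p` modes in the support with the same eigenvalue sum, the
sign products `∏ (-1)^(k-1)` agree. For `N = 2^t p`, the modes `k ≡ c + 2^(t+1) j` (`j < p`,
reflected into `(0, N)`) have angles `cπ/N + 2πj/p` spread evenly around the circle, so their
eigenvalues sum to `0`. The condition `2^(t-1) ∤ a` keeps them in the support for `c = 1` and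
`c = 2`; the first family consists of odd modes, with sign product `1`, and the second of even
modes, with sign product `(-1)^p = -1`.
-/

theorem sin_nat_mul_pi_div_ne_zero {N k : ℕ} (hN : N ≠ 0) (hk : ¬ N ∣ k) : sin (k * π / N) ≠ 0 := by
  rw [Real.sin_ne_zero_iff]
  intro m hm
  apply hk
  have : (k : ℝ) = N * m := by
    field_simp at hm
    nlinarith [Real.pi_pos]
  exact Int.natCast_dvd_natCast.mp ⟨m, by exact_mod_cast this⟩

theorem sum_range_cos_int_mul_pi_div {N : ℕ} (hN : N ≠ 0) {c : ℤ} (hc : ¬ 2 * (N : ℤ) ∣ c) :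
    ∑ m ∈ range N, cos (c * m * π / N) = sin (c * π / 2) ^ 2 := by
  set a : ℝ := c * π / N
  have ha : sin (a / 2) ≠ 0 := by
    rw [Real.sin_ne_zero_iff]
    intro k hk
    apply hc
    refine ⟨k, ?_⟩
    have : (c : ℝ) = 2 * N * k := by
      simp only [a] at hk
      field_simp at hk
      nlinarith [Real.pi_pos]
    exact_mod_cast this
  have hsin_mul_cos : sin (c * π / 2) * cos (c * π / 2) = 0 := by
    have := Real.sin_two_mul (c * π / 2)
    rw [show 2 * (c * π / 2) = c * π by ring, Real.sin_int_mul_pi] at this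
    linarith
  have hNa : (N : ℝ) * a = c * π := by simp only [a]; field_simp
  have hsum := Real.sin_mul_sum_cos N a 0
  rw [show (N : ℝ) * a / 2 = c * π / 2 by rw [hNa],
    show ((N : ℝ) - 1) * a / 2 + 0 = c * π / 2 - a / 2 by linear_combination hNa / 2,
    Real.cos_sub] at hsum
  simp only [add_zero] at hsum
  apply mul_left_cancel₀ ha
  calc sin (a / 2) * ∑ m ∈ range N, cos (c * m * π / N)
      = sin (a / 2) * ∑ m ∈ range N, cos (a * m) := by
        congr 1; refine sum_congr rfl fun m _ => ?_; simp only [a]; ring_nf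
    _ = sin (a / 2) * sin (c * π / 2) ^ 2 := by
        rw [hsum]; linear_combination cos (a / 2) * hsin_mul_cos

theorem sum_range_sin_mul_sin {N j k : ℕ} (hj0 : 0 < j) (hj : j < N) (hk0 : 0 < k) (hk : k < N) :
    ∑ m ∈ range N, sin (j * m * π / N) * sin (m * k * π / N) =
      if j = k then (N : ℝ) / 2 else 0 := by
  have hN : N ≠ 0 := by omega
  have hprod : ∀ m : ℕ, sin (j * m * π / N) * sin (m * k * π / N) =
      (cos (((j : ℤ) - k : ℤ) * m * π / N) - cos (((j : ℤ) + k : ℤ) * m * π / N)) / 2 := by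
    intro m
    have h := Real.two_mul_sin_mul_sin (j * m * π / N) (m * k * π / N)
    push_cast
    rw [show ((j : ℝ) - k) * m * π / N = j * m * π / N - m * k * π / N by ring,
      show ((j : ℝ) + k) * m * π / N = j * m * π / N + m * k * π / N by ring, ← h]
    ring
  have hplus : ¬ 2 * (N : ℤ) ∣ (j : ℤ) + k := fun h =>
    absurd (Int.le_of_dvd (by omega) h) (by omega)
  simp_rw [hprod, ← sum_div, sum_sub_distrib, sum_range_cos_int_mul_pi_div hN hplus]
  split_ifs with hjk
  · subst hjk
    rw [show (((j : ℤ) + j : ℤ) : ℝ) * π / 2 = j * π by push_cast; ring, Real.sin_nat_mul_pi]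
    simp
  · have hminus : ¬ 2 * (N : ℤ) ∣ (j : ℤ) - k := fun h =>
      hjk (by have := Int.eq_zero_of_abs_lt_dvd h (by rw [abs_lt]; omega); omega)
    rw [sum_range_cos_int_mul_pi_div hN hminus]
    have : ((j : ℤ) + k : ℤ) * π / 2 = ((j : ℤ) - k : ℤ) * π / 2 + (k : ℤ) * π := by
      push_cast; ring
    rw [this, Real.sin_add_int_mul_pi, mul_pow, zpow_natCast, ← pow_mul, pow_mul', neg_one_sq,
      one_pow, one_mul, sub_self, zero_div]

theorem sum_pathAdj_mul {n : ℕ} (f : ℕ → ℂ) (h0 : f 0 = 0) (hn : f (n + 1) = 0) (j : Fin n) :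
    ∑ l, pathAdj n j l * f (l + 1) = f j + f (j + 2) := by
  simp only [pathAdj, Matrix.of_apply]
  rw [Fin.sum_univ_eq_sum_range
      (fun l => (if (j : ℕ) + 1 = l ∨ l + 1 = j then 1 else 0) * f (l + 1)),
    sum_eq_add ((j : ℕ) + 1) ((j : ℕ) - 1) (by omega) (fun l _ hl => by simp; omega)
      (fun h => by rw [show (j : ℕ) + 1 + 1 = n + 1 by simp at h; omega, hn, mul_zero])
      (fun h => by simp at h; omega), add_comm]
  rcases Nat.eq_zero_or_pos (j : ℕ) with hj | hj
  · simp [hj, h0]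
  · simp [show (j : ℕ) - 1 + 1 = j by omega]

noncomputable def pathSine (n : ℕ) : Matrix (Fin n) (Fin n) ℂ :=
  Matrix.of fun j k => (sin ((j + 1 : ℕ) * (k + 1 : ℕ) * π / (n + 1 : ℕ)) : ℂ)

noncomputable def pathEigenvalue (n : ℕ) (k : Fin n) : ℝ :=
  2 * cos ((k + 1 : ℕ) * π / (n + 1 : ℕ))

theorem pathSine_mul_self (n : ℕ) : pathSine n * pathSine n = (((n + 1 : ℕ) : ℂ) / 2) • 1 := by
  ext j k
  have h := sum_range_sin_mul_sin (N := n + 1) j.succ_pos (by simp) k.succ_pos (by simp)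
  rw [sum_range_succ', ← Fin.sum_univ_eq_sum_range] at h
  simp only [Fin.val_succ, Nat.cast_zero, mul_zero, zero_mul, zero_div, Real.sin_zero, add_zero,
    add_left_inj, Fin.val_inj] at h
  simp only [Matrix.mul_apply, pathSine, Matrix.of_apply, Matrix.smul_apply, Matrix.one_apply]
  rw [← Complex.ofReal_inj] at h
  push_cast at h ⊢
  rw [h]
  split_ifs <;> simp

theorem pathAdj_mul_pathSine (n : ℕ) :
    pathAdj n * pathSine n = pathSine n * Matrix.diagonal (fun k => (pathEigenvalue n k : ℂ)) := by
  ext j k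
  rw [Matrix.mul_apply, Matrix.mul_diagonal]
  have := sum_pathAdj_mul (n := n) (fun m => (sin (m * (k + 1 : ℕ) * π / (n + 1 : ℕ)) : ℂ))
    (by simp) (by rw [mul_assoc, mul_div_cancel_left₀ _ (by positivity), Real.sin_nat_mul_pi,
      Complex.ofReal_zero]) j
  simp only [pathSine, pathEigenvalue, Matrix.of_apply] at this ⊢
  rw [this, ← Complex.ofReal_add, ← Complex.ofReal_mul, Complex.ofReal_inj]
  set y : ℝ := ((k + 1 : ℕ) : ℝ) * π / (n + 1 : ℕ)
  set x : ℝ := ((j + 1 : ℕ) : ℝ) * (k + 1 : ℕ) * π / (n + 1 : ℕ)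
  rw [show (j : ℝ) * (k + 1 : ℕ) * π / (n + 1 : ℕ) = x - y by simp only [x, y]; push_cast; ring,
    show ((j + 2 : ℕ) : ℝ) * (k + 1 : ℕ) * π / (n + 1 : ℕ) = x + y by
      simp only [x, y]; push_cast; ring,
    Real.sin_sub, Real.sin_add]
  ring

theorem pathU_eq (n : ℕ) (τ : ℝ) :
    pathU n τ = ((2 : ℂ) / (n + 1 : ℕ)) •
      (pathSine n * Matrix.diagonal (fun k => Complex.exp (↑(τ * pathEigenvalue n k) * Complex.I)) *
        pathSine n) := by
  set S := pathSine n
  have hc : ((n + 1 : ℕ) : ℂ) / 2 ≠ 0 :=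
    div_ne_zero (Nat.cast_ne_zero.mpr n.succ_ne_zero) two_ne_zero
  have hright : S * ((((n + 1 : ℕ) : ℂ) / 2)⁻¹ • S) = 1 := by
    rw [Matrix.mul_smul, pathSine_mul_self, smul_smul, inv_mul_cancel₀ hc, one_smul]
  have hdet := Matrix.isUnit_det_of_right_inverse hright
  have hA : pathAdj n = S * Matrix.diagonal (fun k => (pathEigenvalue n k : ℂ)) * S⁻¹ := by
    rw [← pathAdj_mul_pathSine, Matrix.mul_assoc, Matrix.mul_nonsing_inv _ hdet, Matrix.mul_one]
  rw [pathU, hA, ← Matrix.smul_mul, ← Matrix.mul_smul, ← Matrix.diagonal_smul,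
    Matrix.exp_conj _ _ ((Matrix.isUnit_iff_isUnit_det S).mpr hdet), Matrix.exp_diagonal,
    Matrix.inv_eq_right_inv hright, Matrix.mul_smul, inv_div]
  congr 4 with k
  simp only [Pi.exp_def, ← Complex.exp_eq_exp_ℂ, Pi.smul_apply, smul_eq_mul]
  push_cast
  ring_nf

theorem pathSine_rev (n : ℕ) (j k : Fin n) :
    pathSine n k j.rev = (-1) ^ (k : ℕ) * pathSine n j k := by
  simp only [pathSine, Matrix.of_apply, Fin.val_rev]
  rw [show ((k + 1 : ℕ) : ℝ) * (n - (j + 1) + 1 : ℕ) * π / (n + 1 : ℕ) =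
      (k + 1 : ℕ) * π - (j + 1 : ℕ) * (k + 1 : ℕ) * π / (n + 1 : ℕ) by
    rw [show n - ((j : ℕ) + 1) + 1 = (n + 1) - (j + 1) by omega, Nat.cast_sub (by omega)]
    field_simp,
    Real.sin_nat_mul_pi_sub]
  push_cast
  ring

noncomputable def pathWeight (n : ℕ) (j k : Fin n) : ℝ :=
  2 / (n + 1 : ℕ) * sin ((j + 1 : ℕ) * (k + 1 : ℕ) * π / (n + 1 : ℕ)) ^ 2

theorem pathU_apply_rev (n : ℕ) (τ : ℝ) (j : Fin n) :
    pathU n τ j j.rev = ∑ k, (pathWeight n j k : ℂ) *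
      ((-1) ^ (k : ℕ) * Complex.exp (↑(τ * pathEigenvalue n k) * Complex.I)) := by
  rw [pathU_eq, Matrix.smul_apply, Matrix.mul_apply, smul_eq_mul, mul_sum]
  refine sum_congr rfl fun k _ => ?_
  rw [Matrix.mul_diagonal, pathSine_rev]
  simp only [pathWeight, pathSine, Matrix.of_apply]
  push_cast
  ring

theorem sum_pathWeight (n : ℕ) (j : Fin n) : ∑ k, pathWeight n j k = 1 := by
  have h := sum_range_sin_mul_sin (N := n + 1) j.succ_pos (by simp) j.succ_pos (by simp)
  rw [sum_range_succ', ← Fin.sum_univ_eq_sum_range, if_pos rfl] at h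
  simp only [Fin.val_succ, Nat.cast_zero, mul_zero, zero_mul, zero_div, Real.sin_zero,
    add_zero] at h
  have hsq : ∑ k : Fin n, sin ((j + 1 : ℕ) * (k + 1 : ℕ) * π / (n + 1 : ℕ)) ^ 2 =
      (n + 1 : ℕ) / 2 := by
    rw [← h]
    exact sum_congr rfl fun k _ => by rw [sq, mul_comm ((k + 1 : ℕ) : ℝ)]
  simp only [pathWeight]
  rw [← mul_sum, hsq]
  field_simp

theorem pathWeight_pos {n : ℕ} {j k : Fin n} (h : ¬ n + 1 ∣ (j + 1) * (k + 1)) :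
    0 < pathWeight n j k := by
  have := sin_nat_mul_pi_div_ne_zero n.succ_ne_zero h
  rw [Nat.cast_mul] at this
  unfold pathWeight
  exact mul_pos (by positivity) (sq_pos_of_ne_zero this)

theorem pathWeight_nonneg (n : ℕ) (j k : Fin n) : 0 ≤ pathWeight n j k := by
  unfold pathWeight
  positivity

theorem norm_prod_sub_prod_le {ι R : Type*} [NormedCommRing R] [NormOneClass R] (s : Finset ι)
    {f g : ι → R} (hf : ∀ i ∈ s, ‖f i‖ ≤ 1) (hg : ∀ i ∈ s, ‖g i‖ ≤ 1) :
    ‖∏ i ∈ s, f i - ∏ i ∈ s, g i‖ ≤ ∑ i ∈ s, ‖f i - g i‖ := by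
  classical
  induction s using Finset.induction_on with
  | empty => simp
  | insert a s ha ih =>
    rw [prod_insert ha, prod_insert ha, sum_insert ha]
    have hfs : ‖∏ i ∈ s, f i‖ ≤ 1 :=
      (Finset.norm_prod_le _ _).trans
        (prod_le_one (fun _ _ => norm_nonneg _) fun i hi => hf i (mem_insert_of_mem hi))
    have hga : ‖g a‖ ≤ 1 := hg a (mem_insert_self a s)
    calc ‖f a * ∏ i ∈ s, f i - g a * ∏ i ∈ s, g i‖
        = ‖(f a - g a) * ∏ i ∈ s, f i + g a * (∏ i ∈ s, f i - ∏ i ∈ s, g i)‖ := by ring_nf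
      _ ≤ ‖f a - g a‖ * ‖∏ i ∈ s, f i‖ + ‖g a‖ * ‖∏ i ∈ s, f i - ∏ i ∈ s, g i‖ :=
        (norm_add_le _ _).trans (add_le_add (norm_mul_le _ _) (norm_mul_le _ _))
      _ ≤ ‖f a - g a‖ + ∑ i ∈ s, ‖f i - g i‖ := by
        gcongr
        · exact mul_le_of_le_one_right (norm_nonneg _) hfs
        · exact (mul_le_of_le_one_left (norm_nonneg _) hga).trans
            (ih (fun i hi => hf i (mem_insert_of_mem hi)) fun i hi => hg i (mem_insert_of_mem hi))

theorem exists_norm_eq_one_sum_mul_norm_sub_sq {ι : Type*} [Fintype ι] (w : ι → ℝ) {u : ι → ℂ}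
    (hu : ∀ i, ‖u i‖ = 1) :
    ∃ ζ : ℂ, ‖ζ‖ = 1 ∧
      ∑ i, w i * ‖u i - ζ‖ ^ 2 = 2 * (∑ i, w i - ‖∑ i, w i * u i‖) := by
  set z := ∑ i, (w i : ℂ) * u i
  set ζ := Complex.exp (z.arg * Complex.I)
  have hζ : ‖ζ‖ = 1 := Complex.norm_exp_ofReal_mul_I _
  refine ⟨ζ, hζ, ?_⟩
  have hterm : ∀ i, ‖u i - ζ‖ ^ 2 = 2 - 2 * (u i * (starRingEnd ℂ) ζ).re := fun i => by
    rw [Complex.sq_norm, Complex.normSq_sub, Complex.normSq_eq_norm_sq, Complex.normSq_eq_norm_sq,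
      hu, hζ]
    ring
  have hz : (z * (starRingEnd ℂ) ζ).re = ‖z‖ := by
    conv_lhs => rw [← Complex.norm_mul_exp_arg_mul_I z]
    rw [mul_assoc, Complex.mul_conj, Complex.normSq_eq_norm_sq, hζ]
    simp
  calc ∑ i, w i * ‖u i - ζ‖ ^ 2
        = ∑ i, (2 * w i - 2 * ((w i : ℂ) * u i * (starRingEnd ℂ) ζ).re) :=
        sum_congr rfl fun i _ => by rw [hterm, mul_assoc, Complex.re_ofReal_mul]; ring
    _ = 2 * (∑ i, w i - ‖z‖) := by
        rw [sum_sub_distrib, ← mul_sum, ← mul_sum, ← Complex.re_sum, ← sum_mul, hz, mul_sub]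

section Alignment

variable {ι κ : Type*} [Fintype ι] [Fintype κ] {w : ι → ℝ} {s : ι → ℂ} {θ : ι → ℝ}

theorem norm_prod_sub_prod_le_of_lt_norm_sum (hw : ∀ i, 0 ≤ w i) (hw1 : ∑ i, w i ≤ 1)
    (hs : ∀ i, ‖s i‖ = 1) {τ ε : ℝ}
    (hτ : 1 - ε < ‖∑ i, w i * (s i * Complex.exp (↑(τ * θ i) * Complex.I))‖)
    {r r' : κ → ι} (hr : ∀ j, 0 < w (r j)) (hr' : ∀ j, 0 < w (r' j))
    (hθ : ∑ j, θ (r j) = ∑ j, θ (r' j)) :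
    ‖∏ j, s (r j) - ∏ j, s (r' j)‖ ≤
      (∑ j, √(2 / w (r j)) + ∑ j, √(2 / w (r' j))) * √ε := by
  set u : ι → ℂ := fun i => s i * Complex.exp (↑(τ * θ i) * Complex.I)
  have hu : ∀ i, ‖u i‖ = 1 := fun i => by
    rw [norm_mul, hs, Complex.norm_exp_ofReal_mul_I, one_mul]
  obtain ⟨ζ, hζ, hsum⟩ := exists_norm_eq_one_sum_mul_norm_sub_sq w hu
  have hclose : ∀ i, 0 < w i → ‖u i - ζ‖ ≤ √(2 / w i) * √ε := fun i hi => by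
    have hle : w i * ‖u i - ζ‖ ^ 2 ≤ 2 * ε := by
      calc w i * ‖u i - ζ‖ ^ 2 ≤ ∑ i, w i * ‖u i - ζ‖ ^ 2 :=
            single_le_sum (f := fun i => w i * ‖u i - ζ‖ ^ 2)
              (fun i _ => mul_nonneg (hw i) (sq_nonneg _)) (mem_univ i)
        _ ≤ 2 * ε := by rw [hsum]; linarith
    have hε : 0 ≤ ε := by nlinarith [hw i]
    rw [← Real.sqrt_mul (by positivity), Real.le_sqrt (norm_nonneg _) (by positivity)]
    rw [div_mul_eq_mul_div, le_div_iff₀ hi]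
    linarith
  have hchain : ∀ r : κ → ι, (∀ j, 0 < w (r j)) →
      ‖∏ j, u (r j) - ∏ _j : κ, ζ‖ ≤ (∑ j, √(2 / w (r j))) * √ε := fun r hr => by
    rw [sum_mul]
    exact (norm_prod_sub_prod_le _ (fun j _ => (hu _).le) fun _ _ => hζ.le).trans
      (sum_le_sum fun j _ => hclose _ (hr j))
  have hphase : ∀ r : κ → ι, ∏ j, u (r j) =
      (∏ j, s (r j)) * Complex.exp (↑(τ * ∑ j, θ (r j)) * Complex.I) := fun r => by
    simp only [u, prod_mul_distrib, ← Complex.exp_sum, mul_sum, Complex.ofReal_sum, sum_mul]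
  calc ‖∏ j, s (r j) - ∏ j, s (r' j)‖
      = ‖∏ j, u (r j) - ∏ j, u (r' j)‖ := by
        rw [hphase, hphase, hθ, ← sub_mul, norm_mul, Complex.norm_exp_ofReal_mul_I, mul_one]
    _ ≤ ‖∏ j, u (r j) - ∏ _j : κ, ζ‖ + ‖∏ j, u (r' j) - ∏ _j : κ, ζ‖ := by
        simpa only [dist_eq_norm] using dist_triangle_right _ _ (∏ _j : κ, ζ)
    _ ≤ _ := by rw [add_mul]; exact add_le_add (hchain r hr) (hchain r' hr')

theorem prod_eq_prod_of_forall_exists_lt_norm_sum (hw : ∀ i, 0 ≤ w i) (hw1 : ∑ i, w i ≤ 1)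
    (hs : ∀ i, ‖s i‖ = 1)
    (h : ∀ ε > 0, ∃ τ : ℝ, 1 - ε < ‖∑ i, w i * (s i * Complex.exp (↑(τ * θ i) * Complex.I))‖)
    {r r' : κ → ι} (hr : ∀ j, 0 < w (r j)) (hr' : ∀ j, 0 < w (r' j))
    (hθ : ∑ j, θ (r j) = ∑ j, θ (r' j)) :
    ∏ j, s (r j) = ∏ j, s (r' j) := by
  set C := ∑ j, √(2 / w (r j)) + ∑ j, √(2 / w (r' j))
  have hbound : ∀ ε > 0, ‖∏ j, s (r j) - ∏ j, s (r' j)‖ ≤ C * √ε := fun ε hε => by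
    obtain ⟨τ, hτ⟩ := h ε hε
    exact norm_prod_sub_prod_le_of_lt_norm_sum hw hw1 hs hτ hr hr' hθ
  have hlim : Tendsto (fun ε => C * √ε) (𝓝[>] 0) (𝓝 0) :=
    ((continuous_const.mul Real.continuous_sqrt).tendsto' 0 0 (by simp)).mono_left
      nhdsWithin_le_nhds
  exact sub_eq_zero.mp (norm_le_zero_iff.mp
    (ge_of_tendsto hlim (eventually_nhdsWithin_of_forall hbound)))

end Alignment

theorem sum_range_cos_two_pi_div_mul_add {p : ℕ} (hp : 2 ≤ p) (b : ℝ) :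
    ∑ j ∈ range p, cos (2 * π / p * j + b) = 0 := by
  have hp0 : (p : ℝ) ≠ 0 := by positivity
  have h : ∀ k : ℤ, 2 * π / p ≠ k * (2 * π) := fun k hk => by
    have hkp : (k : ℝ) * p = 1 := by
      field_simp at hk
      nlinarith [Real.pi_pos]
    have := Int.eq_one_of_mul_eq_one_left (by positivity) (by exact_mod_cast hkp : k * (p : ℤ) = 1)
    omega
  rw [Real.sum_cos p h, show (p : ℝ) * (2 * π / p) / 2 = π by field_simp, Real.sin_pi, zero_mul,
    zero_div]

theorem exists_pos_lt_cos_eq_of_lt_two_mul {N a x : ℕ} (hx : x < 2 * N) (hax : ¬ N ∣ a * x) :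
    ∃ r, 0 < r ∧ r < N ∧ ¬ N ∣ a * r ∧ r % 2 = x % 2 ∧ cos (r * π / N) = cos (x * π / N) := by
  have hx0 : x ≠ 0 := by rintro rfl; simp at hax
  have hxN : x ≠ N := by rintro rfl; simp at hax
  rcases lt_or_gt_of_ne hxN with hlt | hgt
  · exact ⟨x, by omega, hlt, hax, rfl, rfl⟩
  refine ⟨2 * N - x, by omega, by omega, fun h => hax ?_, by omega, ?_⟩
  · have hsum : a * (2 * N - x) + a * x = N * (2 * a) := by
      rw [← mul_add, Nat.sub_add_cancel hx.le]; ring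
    exact (Nat.dvd_add_right h).mp (hsum ▸ dvd_mul_right N _)
  · have hN : (N : ℝ) ≠ 0 := Nat.cast_ne_zero.mpr (by omega)
    rw [Nat.cast_sub hx.le,
      show ((2 * N : ℕ) - x : ℝ) * π / N = -(x * π / N) + (1 : ℕ) * (2 * π) by
        push_cast; field_simp; ring,
      Real.cos_add_nat_mul_two_pi, Real.cos_neg]

theorem exists_modes_sum_cos_eq_zero {M p a k₀ : ℕ} (hp : 2 ≤ p) (hk₀ : k₀ < 2 * M)
    (ha : ∀ j < p, ¬ M * p ∣ a * (k₀ + 2 * M * j)) :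
    ∃ r : Fin p → ℕ, (∀ j, 0 < r j ∧ r j < M * p ∧ ¬ M * p ∣ a * r j ∧ r j % 2 = k₀ % 2) ∧
      ∑ j, cos (r j * π / (M * p : ℕ)) = 0 := by
  have hx : ∀ j : Fin p, k₀ + 2 * M * j < 2 * (M * p) := fun j => by
    have := Nat.mul_le_mul_left (2 * M) (Nat.succ_le_of_lt j.2)
    rw [Nat.mul_succ] at this
    linarith
  choose r hr using fun j : Fin p => exists_pos_lt_cos_eq_of_lt_two_mul (hx j) (ha j j.2)
  refine ⟨r, fun j => ⟨(hr j).1, (hr j).2.1, (hr j).2.2.1, ?_⟩, ?_⟩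
  · rw [(hr j).2.2.2.1, mul_assoc, Nat.add_mul_mod_self_left]
  · simp_rw [fun j => (hr j).2.2.2.2]
    rw [Fin.sum_univ_eq_sum_range (fun j => cos ((k₀ + 2 * M * j : ℕ) * π / (M * p : ℕ))) p]
    have hM : (M : ℝ) ≠ 0 := Nat.cast_ne_zero.mpr (by omega)
    have hp0 : (p : ℝ) ≠ 0 := by positivity
    rw [← sum_range_cos_two_pi_div_mul_add hp (k₀ * π / (M * p : ℕ))]
    refine sum_congr rfl fun j _ => congrArg cos ?_
    push_cast
    field_simp
    ring

theorem not_dvd_mul_add_two_mul_two_pow_mul {s p a k : ℕ} (ha : ¬ 2 ^ s ∣ a)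
    (hk : k = 1 ∨ k = 2) (j : ℕ) : ¬ 2 ^ (s + 1) * p ∣ a * (k + 2 * 2 ^ (s + 1) * j) := by
  obtain ⟨m, hm, hkm⟩ : ∃ m, Odd m ∧ k + 2 * 2 ^ (s + 1) * j = k * m := by
    rcases hk with rfl | rfl
    · exact ⟨_, odd_two_mul_add_one (2 ^ (s + 1) * j), by ring⟩
    · exact ⟨_, odd_two_mul_add_one (2 ^ s * j), by ring⟩
  have hk2 : k ∣ 2 := by rcases hk with rfl | rfl <;> norm_num
  intro h
  rw [hkm, ← mul_assoc] at h
  have h2 : 2 ^ s * 2 ∣ a * 2 :=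
    ((Nat.Coprime.pow_left _ (Nat.coprime_two_left.mpr hm)).dvd_of_dvd_mul_right
      ((Dvd.intro p rfl).trans h)).trans (mul_dvd_mul_left a hk2)
  exact ha (Nat.dvd_of_mul_dvd_mul_right two_pos h2)

theorem exists_pathWeight_pos_sum_pathEigenvalue_eq_zero {n M p a k₀ : ℕ} (hN : n + 1 = M * p)
    (hp : 2 ≤ p) (hk₀ : k₀ < 2 * M)
    (ha : ∀ j < p, ¬ M * p ∣ a * (k₀ + 2 * M * j)) {i : Fin n} (hi : (i : ℕ) + 1 = a) :
    ∃ ρ : Fin p → Fin n, (∀ j, 0 < pathWeight n i (ρ j)) ∧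
      (∀ j, (-1 : ℂ) ^ (ρ j : ℕ) = -(-1) ^ k₀) ∧ ∑ j, pathEigenvalue n (ρ j) = 0 := by
  obtain ⟨r, hr, hcos⟩ := exists_modes_sum_cos_eq_zero hp hk₀ ha
  have hρ : ∀ j, r j - 1 + 1 = r j := fun j => Nat.sub_add_cancel (hr j).1
  refine ⟨fun j => ⟨r j - 1, by have := (hr j).2.1; omega⟩, fun j => ?_, fun j => ?_, ?_⟩
  · apply pathWeight_pos
    rw [hi, hρ, hN]
    exact (hr j).2.2.1
  · show (-1 : ℂ) ^ (r j - 1) = -(-1) ^ k₀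
    have hsucc : (-1 : ℂ) ^ r j = (-1) ^ (r j - 1) * (-1) := by rw [← pow_succ, hρ]
    have hparity : (-1 : ℂ) ^ r j = (-1) ^ k₀ := by
      rw [neg_one_pow_eq_pow_mod_two, (hr j).2.2.2, ← neg_one_pow_eq_pow_mod_two]
    linear_combination hsucc - hparity
  · simp only [pathEigenvalue, ← mul_sum, hρ, hN, hcos, mul_zero]

/-- If `n = 2^t * p - 1` where `t` is a positive integer and `p` is an odd prime, and `a` is a
vertex not divisible by `2^(t-1)`, then pretty good state transfer does not occur in `P_n`
between vertices `a` and `n + 1 - a`. -/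
theorem no_pgst_of_not_dvd (t p : ℕ) (hp : p.Prime) (hp' : Odd p)
    (n : ℕ) (hn : n = 2 ^ t * p - 1)
    (a : ℕ) (ha : 1 ≤ a) (ha' : a ≤ n) (hndvd : ¬ 2 ^ (t - 1) ∣ a) :
    ¬ PGST n ⟨a - 1, by omega⟩ ⟨n + 1 - a - 1, by omega⟩ := by
  intro hpgst
  obtain ⟨s, rfl⟩ :=
    Nat.exists_eq_add_one_of_ne_zero (by rintro rfl; exact hndvd (by simp) : t ≠ 0)
  rw [Nat.add_sub_cancel] at hndvd
  have hN : n + 1 = 2 ^ (s + 1) * p := by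
    have : 0 < 2 ^ (s + 1) * p := by have := hp.pos; positivity
    omega
  set i : Fin n := ⟨a - 1, by omega⟩
  have hi : (i : ℕ) + 1 = a := by simp [i]; omega
  have hpow : 2 ≤ 2 ^ (s + 1) := by have := Nat.one_le_two_pow (n := s); rw [pow_succ]; omega
  obtain ⟨ρ₁, hw₁, hs₁, hθ₁⟩ := exists_pathWeight_pos_sum_pathEigenvalue_eq_zero hN hp.two_le
    (by omega) (fun j _ => not_dvd_mul_add_two_mul_two_pow_mul hndvd (.inl rfl) j) hi
  obtain ⟨ρ₂, hw₂, hs₂, hθ₂⟩ := exists_pathWeight_pos_sum_pathEigenvalue_eq_zero hN hp.two_le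
    (by omega) (fun j _ => not_dvd_mul_add_two_mul_two_pow_mul hndvd (.inr rfl) j) hi
  have hamp : ∀ ε > 0, ∃ τ : ℝ, 1 - ε < ‖∑ k, (pathWeight n i k : ℂ) *
      ((-1) ^ (k : ℕ) * Complex.exp (↑(τ * pathEigenvalue n k) * Complex.I))‖ := fun ε hε => by
    have hrev : (⟨n + 1 - a - 1, by omega⟩ : Fin n) = i.rev := by ext; simp [i]; omega
    simpa only [hrev, pathU_apply_rev] using hpgst ε hε
  have key := prod_eq_prod_of_forall_exists_lt_norm_sum (pathWeight_nonneg n i)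
    (sum_pathWeight n i).le (fun k => by simp) hamp hw₁ hw₂ (hθ₁.trans hθ₂.symm)
  simp only [hs₁, hs₂] at key
  norm_num [hp'.neg_one_pow] at key
end
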